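/- Let F be a continuous cumulative distribution function supported on [a,b] ⊆ [0,∞) with F(b) = 1, and suppose m ↦ F(m)·m is convex on [a,b]. Consider a k-separating menu with prices 0 < p₁ < p₂ < ⋯ < p_n and qualities 0 < q₁ < ⋯ < q_n such that m_i := (p_i - p_{i-1})/(q_i - q_{i-1}) ∈ [a,b] for all i (with p₀ = q₀ = 0) and m₁ < m₂ < ⋯ < m_n. Then the revenue of the full menu, π(C) = p_n - Σ_{i=1}^{n}(p_i - p_{i-1})·F(m_i), is at most the revenue of the 1-separating menu {(p_n, q_n)}, namely p_n·(1 - F(p_n/q_n)). -/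

import Mathlib

/-!
Write `Δp_i = p_i - p_{i-1}` and `Δq_i = q_i - q_{i-1}`, so that `m_i = Δp_i / Δq_i`. For a convex
`g`, the perspective `(x, y) ↦ y g(x / y)` is convex and positively homogeneous, hence subadditive:
`(∑ Δq_i) g(∑ Δp_i / ∑ Δq_i) ≤ ∑ Δq_i g(m_i)`. With `g m = F m · m` and the telescoping sums
`∑ Δp_i = p_n`, `∑ Δq_i = q_n`, this is `p_n F(p_n / q_n) ≤ ∑ Δp_i F(m_i)`.
-/

open Finset

theorem ConvexOn.sum_mul_map_div_sum_le {ι : Type*} {s : Set ℝ} {g : ℝ → ℝ}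
    (hg : ConvexOn ℝ s g) {t : Finset ι} {x y : ι → ℝ} (hy : ∀ i ∈ t, 0 < y i)
    (ht : t.Nonempty) (hs : ∀ i ∈ t, x i / y i ∈ s) :
    (∑ i ∈ t, y i) * g ((∑ i ∈ t, x i) / ∑ i ∈ t, y i) ≤ ∑ i ∈ t, y i * g (x i / y i) := by
  set Y := ∑ i ∈ t, y i
  have hY : 0 < Y := sum_pos hy ht
  have hw₀ : ∀ i ∈ t, 0 ≤ y i / Y := fun i hi => (div_pos (hy i hi) hY).le
  have hw₁ : ∑ i ∈ t, y i / Y = 1 := by rw [← sum_div, div_self hY.ne']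
  have hJensen := hg.map_sum_le hw₀ hw₁ hs
  have hcenter : ∑ i ∈ t, (y i / Y) • (x i / y i) = (∑ i ∈ t, x i) / Y := by
    rw [sum_div]
    refine sum_congr rfl fun i hi => ?_
    have := (hy i hi).ne'
    rw [smul_eq_mul]
    field_simp
  have hvalue : ∑ i ∈ t, (y i / Y) • g (x i / y i) = (∑ i ∈ t, y i * g (x i / y i)) / Y := by
    rw [sum_div]
    exact sum_congr rfl fun i _ => by rw [smul_eq_mul]; ring
  rw [hcenter, hvalue, le_div_iff₀ hY] at hJensen
  linarith

theorem Finset.sum_Icc_one_sub_pred (f : ℕ → ℝ) (n : ℕ) :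
    ∑ i ∈ Icc 1 n, (f i - f (i - 1)) = f n - f 0 := by
  induction n with
  | zero => simp
  | succ k ih =>
    rw [sum_Icc_succ_top (by omega), ih]
    simp

theorem sub_pred_pos_of_lt_succ {q : ℕ → ℝ} {n : ℕ} (hq0 : q 0 = 0) (hqpos : 0 < q 1)
    (hqmono : ∀ i, 1 ≤ i → i < n → q i < q (i + 1)) {i : ℕ} (hi : i ∈ Icc 1 n) :
    0 < q i - q (i - 1) := by
  obtain ⟨hi₁, hin⟩ := mem_Icc.mp hi
  obtain rfl | hi₁ := hi₁.eq_or_lt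
  · simpa [hq0] using hqpos
  · obtain ⟨j, rfl⟩ : ∃ j, i = j + 1 := ⟨i - 1, by omega⟩
    simpa using hqmono j (by omega) (by omega)

theorem one_separating_beats_full_menu_general
    (F : ℝ → ℝ) (a b : ℝ)
    (hconv : ConvexOn ℝ (Set.Icc a b) (fun m => F m * m))
    (n : ℕ) (hn : 1 ≤ n) (p q : ℕ → ℝ)
    (hp0 : p 0 = 0) (hq0 : q 0 = 0)
    (hqpos : 0 < q 1)
    (hqmono : ∀ i, 1 ≤ i → i < n → q i < q (i + 1))
    (hratio : ∀ i, 1 ≤ i → i ≤ n →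
      (p i - p (i - 1)) / (q i - q (i - 1)) ∈ Set.Icc a b) :
    p n - ∑ i ∈ Finset.Icc 1 n, (p i - p (i - 1)) * F ((p i - p (i - 1)) / (q i - q (i - 1)))
      ≤ p n * (1 - F (p n / q n)) := by
  have hΔq := fun i (hi : i ∈ Icc 1 n) => sub_pred_pos_of_lt_succ hq0 hqpos hqmono hi
  have hqn : 0 < q n := by
    have := sum_pos hΔq (nonempty_Icc.mpr hn)
    rwa [sum_Icc_one_sub_pred, hq0, sub_zero] at this
  have hperspective := hconv.sum_mul_map_div_sum_le hΔq (nonempty_Icc.mpr hn)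
    (fun i hi => hratio i (mem_Icc.mp hi).1 (mem_Icc.mp hi).2)
  have hterm : ∀ i ∈ Icc 1 n, (q i - q (i - 1)) * (F ((p i - p (i - 1)) / (q i - q (i - 1))) *
      ((p i - p (i - 1)) / (q i - q (i - 1)))) =
      (p i - p (i - 1)) * F ((p i - p (i - 1)) / (q i - q (i - 1))) := fun i hi => by
    have := (hΔq i hi).ne'
    field_simp
  rw [sum_congr rfl hterm, sum_Icc_one_sub_pred, sum_Icc_one_sub_pred, hp0, hq0, sub_zero,
    sub_zero, mul_comm (F _), ← mul_assoc, mul_div_cancel₀ _ hqn.ne'] at hperspective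
  linarith

/-- A 1-separating menu beats the full menu when `F(m)·m` is convex.
With prices `0 < p₁ < ⋯ < p_n`, qualities `0 < q₁ < ⋯ < q_n`, `p₀ = q₀ = 0`, and
ratios `m_i = (p_i - p_{i-1})/(q_i - q_{i-1}) ∈ [a,b]` strictly increasing, the full-menu
revenue `p_n - ∑ (p_i - p_{i-1}) F(m_i)` is at most `p_n (1 - F (p_n / q_n))`. -/
theorem one_separating_beats_full_menu
    (F : ℝ → ℝ) (a b : ℝ) (ha : 0 ≤ a) (hab : a < b)
    (hFcont : ContinuousOn F (Set.Icc a b))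
    (hFb : F b = 1)
    (hconv : ConvexOn ℝ (Set.Icc a b) (fun m => F m * m))
    (n : ℕ) (hn : 1 ≤ n) (p q : ℕ → ℝ)
    (hp0 : p 0 = 0) (hq0 : q 0 = 0)
    (hppos : 0 < p 1) (hqpos : 0 < q 1)
    (hpmono : ∀ i, 1 ≤ i → i < n → p i < p (i + 1))
    (hqmono : ∀ i, 1 ≤ i → i < n → q i < q (i + 1))
    (hratio : ∀ i, 1 ≤ i → i ≤ n →
      (p i - p (i - 1)) / (q i - q (i - 1)) ∈ Set.Icc a b)
    (hratiomono : ∀ i, 1 ≤ i → i < n →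
      (p i - p (i - 1)) / (q i - q (i - 1)) <
        (p (i + 1) - p i) / (q (i + 1) - q i)) :
    p n - ∑ i ∈ Finset.Icc 1 n, (p i - p (i - 1)) * F ((p i - p (i - 1)) / (q i - q (i - 1)))
      ≤ p n * (1 - F (p n / q n)) :=
  one_separating_beats_full_menu_general F a b hconv n hn p q hp0 hq0 hqpos hqmono hratio
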